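/- arXiv:1605.02441 — 2 statements merged into one kernel-verified Lean document; each statement's English description precedes it below -/
import Mathlib

section
/- Let E ≥ 0 and P ≥ 1. The maximum over w ∈ [1/(K+1), 1] of g(w) = w·log₂ P / max{1, w(E+1)} equals log₂ P / max{E+1, 1} = log₂ P/(E+1) when E ≥ 0, attained at w = 1; combining with the low-weight regime, the zero-error capacity of Q(P;K;φ) equals max{ log₂(P+1)/(K+1), log₂ P/(E+1) } where E = Σ_{k=0}^{K} k·φ(k). -/
/-!
In the low-weight regime the rate is, after the substitution `p = w (K + 1)`, the `(P+1)`-ary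
entropy of `p` in bits divided by `K + 1`; it peaks at `p = P / (P + 1)` with value
`log₂ (P + 1) / (K + 1)`. In the high-weight regime `w log₂ P / max {1, w (E + 1)}` never exceeds
`log₂ P / (E + 1)`, which is reached at `w = 1`. The capacity is the larger of the two peaks.
-/

open Finset

/-- Binary entropy function to base 2. -/
noncomputable def binH (p : ℝ) : ℝ := -p * Real.logb 2 p - (1 - p) * Real.logb 2 (1 - p)

open Real

lemma binH_add_mul_logb (P : ℕ) (p : ℝ) :
    binH p + p * logb 2 P = qaryEntropy (P + 1) p / log 2 := by
  simp only [binH, qaryEntropy, binEntropy, logb, log_inv]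
  push_cast
  rw [add_sub_cancel_right]
  ring

lemma qaryEntropy_one_sub_inv {q : ℕ} (hq : q ≠ 0) : qaryEntropy q (1 - 1 / q) = log q := by
  rcases eq_or_ne q 1 with rfl | hq1
  · simp
  have hq0 : (q : ℝ) ≠ 0 := by exact_mod_cast hq
  have hq1' : (q : ℝ) - 1 ≠ 0 := sub_ne_zero.2 (by exact_mod_cast hq1)
  have hp : 1 - 1 / (q : ℝ) = (q - 1) / q := by field_simp
  simp only [qaryEntropy, binEntropy, hp, inv_div]
  push_cast
  rw [log_div hq0 hq1']
  field_simp
  simp only [sub_sub_cancel, div_one]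
  ring

lemma isMaxOn_qaryEntropy {q : ℕ} (hq : 2 ≤ q) :
    IsMaxOn (qaryEntropy q) (Set.Icc 0 1) (1 - 1 / q) := by
  have hq' : (2 : ℝ) ≤ q := by exact_mod_cast hq
  have h0 : 0 ≤ 1 - 1 / (q : ℝ) := by
    rw [sub_nonneg, div_le_one (by positivity)]; linarith
  have h1 : 1 - 1 / (q : ℝ) ≤ 1 := by simp
  rintro p ⟨hp0, hp1⟩
  rcases le_total p (1 - 1 / q) with hp | hp
  · exact (qaryEntropy_strictMonoOn hq).monotoneOn ⟨hp0, hp⟩ ⟨h0, le_rfl⟩ hp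
  · exact (qaryEntropy_strictAntiOn hq).antitoneOn ⟨le_rfl, h1⟩ ⟨hp, hp1⟩ hp

lemma qaryEntropy_le_log {q : ℕ} {p : ℝ} (hq : 2 ≤ q) (hp : p ∈ Set.Icc 0 1) :
    qaryEntropy q p ≤ log q :=
  qaryEntropy_one_sub_inv (q := q) (by lia) ▸ isMaxOn_qaryEntropy hq hp

noncomputable def lowWeightRate (P K : ℕ) (w : ℝ) : ℝ :=
  1 / ((K : ℝ) + 1) * binH (w * (K + 1)) + w * logb 2 P

lemma lowWeightRate_eq_qaryEntropy (P K : ℕ) (w : ℝ) :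
    lowWeightRate P K w = qaryEntropy (P + 1) (w * (K + 1)) / log 2 / (K + 1) := by
  rw [lowWeightRate, ← binH_add_mul_logb]
  field_simp

lemma isGreatest_lowWeightRate {P : ℕ} (hP : 1 ≤ P) (K : ℕ) :
    IsGreatest (lowWeightRate P K '' Set.Icc 0 (1 / ((K : ℝ) + 1)))
      (logb 2 ((P : ℝ) + 1) / (K + 1)) := by
  have hK : (0 : ℝ) < K + 1 := by positivity
  have hq := qaryEntropy_one_sub_inv (q := P + 1) (by lia)
  push_cast at hq
  have hp : 1 - 1 / ((P : ℝ) + 1) ∈ Set.Icc 0 1 :=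
    ⟨sub_nonneg.2 (div_le_one_of_le₀ (by simp) (by positivity)), by simp; positivity⟩
  constructor
  · refine ⟨(1 - 1 / ((P : ℝ) + 1)) / (K + 1), ⟨div_nonneg hp.1 hK.le, by gcongr; exact hp.2⟩, ?_⟩
    rw [lowWeightRate_eq_qaryEntropy, div_mul_cancel₀ _ hK.ne', hq, logb]
  · rintro _ ⟨w, ⟨hw₀, hw₁⟩, rfl⟩
    have h := qaryEntropy_le_log (q := P + 1) (by lia)
      ⟨by positivity, (le_div_iff₀ hK).1 hw₁⟩
    push_cast at h
    rw [lowWeightRate_eq_qaryEntropy, logb]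
    gcongr

lemma mul_div_max_one_mul_le {L c : ℝ} (hL : 0 ≤ L) (hc : 0 < c) (w : ℝ) :
    w * L / max 1 (w * c) ≤ L / c := by
  rcases le_total (w * c) 1 with h | h
  · rw [max_eq_left h, div_one, ← one_div_mul_eq_div]
    exact mul_le_mul_of_nonneg_right ((le_div_iff₀ hc).2 h) hL
  · have hw : 0 < w := pos_of_mul_pos_left (by linarith) hc.le
    rw [max_eq_right h, mul_div_mul_left _ _ hw.ne']

lemma isGreatest_max {α : Type*} [LinearOrder α] {S : Set α} {a b : α} (ha : a ∈ S) (hb : b ∈ S)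
    (h : max a b ∈ upperBounds S) : IsGreatest S (max a b) :=
  ⟨Set.pair_subset ha hb isGreatest_pair.1, h⟩

theorem queue_capacity_general (P K : ℕ) (hP : 1 ≤ P) (φ : ℕ → ℝ)
    (hφpos : ∀ k, k ≤ K → 0 < φ k)
    (E : ℝ) (hE : E = ∑ k ∈ range (K + 1), (k : ℝ) * φ k) :
    let g : ℝ → ℝ := fun w => w * Real.logb 2 P / max 1 (w * (E + 1))
    let R : ℝ → ℝ := fun w =>
      if w ≤ 1 / ((K : ℝ) + 1) then (1 / ((K : ℝ) + 1)) * binH (w * (K + 1)) + w * Real.logb 2 P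
      else g w
    IsMaxOn g (Set.Icc (1 / ((K : ℝ) + 1)) 1) 1 ∧
    g 1 = Real.logb 2 P / (E + 1) ∧
    sSup (R '' Set.Icc (0 : ℝ) 1) =
      max (Real.logb 2 ((P : ℝ) + 1) / ((K : ℝ) + 1)) (Real.logb 2 P / (E + 1)) := by
  intro g R
  have hL : 0 ≤ logb 2 P := logb_nonneg one_lt_two (by exact_mod_cast hP)
  have hE₀ : 0 ≤ E := hE ▸ sum_nonneg fun k hk =>
    mul_nonneg k.cast_nonneg (hφpos k (Nat.lt_succ_iff.1 (mem_range.1 hk))).le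
  have hg₁ : g 1 = logb 2 P / (E + 1) := by
    simp only [g, one_mul, max_eq_right (by linarith : (1 : ℝ) ≤ E + 1)]
  have hg : ∀ w, g w ≤ g 1 := hg₁ ▸ mul_div_max_one_mul_le hL (by linarith)
  have hR₁ : R 1 = logb 2 P / (E + 1) := by
    rcases K.eq_zero_or_pos with rfl | hK
    · -- for `K = 0` the point `w = 1` lies in the low-weight branch, and `E = 0`
      simp [R, hE, binH]
    · have : ¬(1 : ℝ) ≤ 1 / ((K : ℝ) + 1) := by
        rw [not_le, div_lt_one (by positivity)]; simpa using hK
      simp only [R, this, if_false, hg₁]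
  have hlow := isGreatest_lowWeightRate hP K
  refine ⟨fun w _ => hg w, hg₁,
    IsGreatest.csSup_eq (isGreatest_max ?_ ⟨1, ⟨zero_le_one, le_rfl⟩, hR₁⟩ ?_)⟩
  · obtain ⟨w, ⟨hw₀, hw₁⟩, hw⟩ := hlow.1
    exact ⟨w, ⟨hw₀, hw₁.trans (div_le_one_of_le₀ (by simp) (by positivity))⟩, (if_pos hw₁).trans hw⟩
  · rintro _ ⟨w, ⟨hw₀, -⟩, rfl⟩
    by_cases hw : w ≤ 1 / ((K : ℝ) + 1)
    · exact (if_pos hw).trans_le ((hlow.2 ⟨w, ⟨hw₀, hw⟩, rfl⟩).trans (le_max_left _ _))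
    · exact (if_neg hw).trans_le ((hg w).trans (hg₁ ▸ le_max_right _ _))

/-- The high-weight regime of the queue's rate function is maximized at `w = 1` with value
`log₂ P/(E+1)`, and the zero-error capacity of `Q(P;K;φ)` equals
`max{ log₂(P+1)/(K+1), log₂ P/(E+1) }`, where `E` is the mean processing time. -/
theorem queue_capacity (P K : ℕ) (hP : 1 ≤ P) (φ : ℕ → ℝ)
    (hφpos : ∀ k, k ≤ K → 0 < φ k) (hφsum : ∑ k ∈ range (K + 1), φ k = 1)
    (E : ℝ) (hE : E = ∑ k ∈ range (K + 1), (k : ℝ) * φ k) :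
    let g : ℝ → ℝ := fun w => w * Real.logb 2 P / max 1 (w * (E + 1))
    let R : ℝ → ℝ := fun w =>
      if w ≤ 1 / ((K : ℝ) + 1) then (1 / ((K : ℝ) + 1)) * binH (w * (K + 1)) + w * Real.logb 2 P
      else g w
    IsMaxOn g (Set.Icc (1 / ((K : ℝ) + 1)) 1) 1 ∧
    g 1 = Real.logb 2 P / (E + 1) ∧
    sSup (R '' Set.Icc (0 : ℝ) 1) =
      max (Real.logb 2 ((P : ℝ) + 1) / ((K : ℝ) + 1)) (Real.logb 2 P / (E + 1)) :=
  queue_capacity_general P K hP φ hφpos E hE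
end

section
/- For fixed K ≥ 0, w ∈ (0,1), and integers n → ∞ with W = ⌊wn⌋, (1/n)·log₂ [ P^W · C(W + ⌊(n−W)/(K+1)⌋, W) ] converges to ((wK+1)/(K+1))·H(w(K+1)/(wK+1)) + w·log₂ P. -/
open Filter

/-!
By Stirling's formula `log m! = m log m - m + o(m)`, so whenever `a n` and `b n` grow linearly,
`log C(a + b, a) = (a + b) · H(a / (a + b)) + o(n)` with `H` the natural-log binary entropy.
Here `a = ⌊wn⌋ ∼ wn` and `b = ⌊(n - a)/(K + 1)⌋ ∼ (1 - w)n/(K + 1)`, so `a + b ∼ n(wK + 1)/(K + 1)`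
and `a / (a + b) → w(K + 1)/(wK + 1)`; the factor `P^a` contributes `w log₂ P`.
-/

open Real Topology

noncomputable def stirlingError (m : ℕ) : ℝ := log m.factorial - (m * log m - m)

theorem tendsto_stirlingError_div_atTop :
    Tendsto (fun m : ℕ => stirlingError m / m) atTop (𝓝 0) := by
  have hseq : Tendsto (fun m : ℕ => log (Stirling.stirlingSeq m) / m) atTop (𝓝 0) :=
    ((continuousAt_log (by positivity)).tendsto.comp
      Stirling.tendsto_stirlingSeq_sqrt_pi).div_atTop tendsto_natCast_atTop_atTop
  have hlog : Tendsto (fun m : ℕ => log (2 * m) / (2 * m)) atTop (𝓝 0) :=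
    isLittleO_log_id_atTop.tendsto_div_nhds_zero.comp
      (tendsto_natCast_atTop_atTop.const_mul_atTop two_pos)
  have hsum := hseq.add hlog
  rw [add_zero] at hsum
  refine hsum.congr' ?_
  filter_upwards [eventually_ne_atTop 0] with m hm
  have hm' : (m : ℝ) ≠ 0 := Nat.cast_ne_zero.mpr hm
  rw [stirlingError, Stirling.log_stirlingSeq_formula, log_div hm' (exp_ne_zero 1), log_exp]
  field_simp
  ring

theorem tendsto_atTop_of_tendsto_div_pos {u : ℕ → ℕ} {α : ℝ} (hα : 0 < α)
    (hu : Tendsto (fun n : ℕ => (u n : ℝ) / n) atTop (𝓝 α)) : Tendsto u atTop atTop := by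
  rw [← tendsto_natCast_atTop_iff (R := ℝ)]
  refine (hu.pos_mul_atTop hα tendsto_natCast_atTop_atTop).congr' ?_
  filter_upwards [eventually_ne_atTop 0] with n hn
  field_simp

theorem tendsto_stirlingError_comp_div_atTop {u : ℕ → ℕ} {α : ℝ} (hα : 0 < α)
    (hu : Tendsto (fun n : ℕ => (u n : ℝ) / n) atTop (𝓝 α)) :
    Tendsto (fun n : ℕ => stirlingError (u n) / n) atTop (𝓝 0) := by
  have h := (tendsto_stirlingError_div_atTop.comp (tendsto_atTop_of_tendsto_div_pos hα hu)).mul hu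
  rw [zero_mul] at h
  refine h.congr' ?_
  filter_upwards [(tendsto_atTop_of_tendsto_div_pos hα hu).eventually_ne_atTop 0] with n hn
  have hn' : (u n : ℝ) ≠ 0 := Nat.cast_ne_zero.mpr hn
  simp only [Function.comp_apply]
  field_simp

theorem add_mul_binEntropy_div_add {x y : ℝ} (hx : 0 < x) (hy : 0 < y) :
    (x + y) * binEntropy (x / (x + y)) = (x + y) * log (x + y) - x * log x - y * log y := by
  have hxy : 0 < x + y := by positivity
  have h1 : 1 - x / (x + y) = y / (x + y) := by field_simp; ring
  rw [binEntropy, h1, inv_div, inv_div, log_div hxy.ne' hx.ne', log_div hxy.ne' hy.ne']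
  field_simp
  ring

theorem log_choose_add_eq {a b : ℕ} (ha : 0 < a) (hb : 0 < b) :
    log ((a + b).choose a) = (a + b) * binEntropy (a / (a + b)) +
      (stirlingError (a + b) - stirlingError a - stirlingError b) := by
  have hfact : ((a + b).choose a : ℝ) * a.factorial * b.factorial = (a + b).factorial := by
    rw [Nat.choose_symm_add]
    exact_mod_cast Nat.add_choose_mul_factorial_mul_factorial a b
  have hpos : ∀ m : ℕ, (m.factorial : ℝ) ≠ 0 := fun m => Nat.cast_ne_zero.mpr m.factorial_ne_zero
  have hchoose : ((a + b).choose a : ℝ) ≠ 0 :=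
    Nat.cast_ne_zero.mpr (Nat.choose_pos (Nat.le_add_right a b)).ne'
  have hlog := congrArg log hfact
  rw [log_mul (mul_ne_zero hchoose (hpos a)) (hpos b), log_mul hchoose (hpos a)] at hlog
  rw [add_mul_binEntropy_div_add (Nat.cast_pos.mpr ha) (Nat.cast_pos.mpr hb)]
  simp only [stirlingError]
  push_cast
  linarith

theorem tendsto_log_choose_div_atTop {a b : ℕ → ℕ} {α β : ℝ} (hα : 0 < α) (hβ : 0 < β)
    (ha : Tendsto (fun n : ℕ => (a n : ℝ) / n) atTop (𝓝 α))
    (hb : Tendsto (fun n : ℕ => (b n : ℝ) / n) atTop (𝓝 β)) :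
    Tendsto (fun n : ℕ => log ((a n + b n).choose (a n)) / n) atTop
      (𝓝 ((α + β) * binEntropy (α / (α + β)))) := by
  have hab : Tendsto (fun n : ℕ => ((a n + b n : ℕ) : ℝ) / n) atTop (𝓝 (α + β)) := by
    simpa only [Nat.cast_add, add_div] using ha.add hb
  have hmain := (hab.mul (binEntropy_continuous.continuousAt.tendsto.comp
    (ha.div hab (by positivity)))).add
    (((tendsto_stirlingError_comp_div_atTop (by positivity) hab).sub
      (tendsto_stirlingError_comp_div_atTop hα ha)).sub
      (tendsto_stirlingError_comp_div_atTop hβ hb))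
  rw [sub_zero, sub_zero, add_zero] at hmain
  refine hmain.congr' ?_
  filter_upwards [(tendsto_atTop_of_tendsto_div_pos hα ha).eventually_gt_atTop 0,
    (tendsto_atTop_of_tendsto_div_pos hβ hb).eventually_gt_atTop 0,
    eventually_ne_atTop 0] with n han hbn hn
  have hn' : (n : ℝ) ≠ 0 := Nat.cast_ne_zero.mpr hn
  rw [log_choose_add_eq han hbn]
  simp only [Function.comp_apply, Pi.div_apply, Nat.cast_add]
  rw [div_div_div_cancel_right₀ hn']
  field_simp

theorem tendsto_natCast_div_div_atTop {u : ℕ → ℕ} {c : ℝ} (k : ℕ)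
    (hu : Tendsto (fun n : ℕ => (u n : ℝ) / n) atTop (𝓝 c)) :
    Tendsto (fun n : ℕ => ((u n / k : ℕ) : ℝ) / n) atTop (𝓝 (c / k)) := by
  have hupper : Tendsto (fun n : ℕ => (u n : ℝ) / n / k) atTop (𝓝 (c / k)) := hu.div_const _
  have hlower : Tendsto (fun n : ℕ => (u n : ℝ) / n / k - 1 / n) atTop (𝓝 (c / k)) := by
    simpa using hupper.sub tendsto_one_div_atTop_nhds_zero_nat
  refine tendsto_of_tendsto_of_tendsto_of_le_of_le hlower hupper (fun n => ?_) (fun n => ?_)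
  · have h := (Nat.lt_floor_add_one ((u n : ℝ) / k)).le
    rw [Nat.floor_div_eq_div] at h
    rw [div_right_comm, ← sub_div]
    gcongr
    linarith
  · rw [div_right_comm]
    gcongr
    exact Nat.cast_div_le

theorem tendsto_sub_nat_floor_mul_div_atTop {w : ℝ} (hw0 : 0 ≤ w) (hw1 : w ≤ 1) :
    Tendsto (fun n : ℕ => ((n - ⌊w * n⌋₊ : ℕ) : ℝ) / n) atTop (𝓝 (1 - w)) := by
  have hfloor := (tendsto_nat_floor_mul_div_atTop hw0).comp tendsto_natCast_atTop_atTop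
  refine (tendsto_const_nhds.sub hfloor).congr' ?_
  filter_upwards [eventually_ne_atTop 0] with n hn
  have hle : ⌊w * n⌋₊ ≤ n := Nat.floor_le_of_le (by nlinarith [(Nat.cast_nonneg n : (0:ℝ) ≤ n)])
  have hn' : (n : ℝ) ≠ 0 := Nat.cast_ne_zero.mpr hn
  simp only [Function.comp_apply]
  rw [Nat.cast_sub hle]
  field_simp

theorem binH_eq_binEntropy_div_log_two (p : ℝ) : binH p = binEntropy p / log 2 := by
  rw [binH, binEntropy, logb, logb, log_inv, log_inv]
  ring

/-- Asymptotics of the constant-weight code sizes: with `W = ⌊wn⌋`,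
`(1/n)·log₂[P^W · C(W + ⌊(n−W)/(K+1)⌋, W)]` converges to
`((wK+1)/(K+1))·H(w(K+1)/(wK+1)) + w·log₂ P`. -/
theorem constant_weight_capacity_limit (P K : ℕ) (hP : 1 ≤ P) (w : ℝ) (hw : w ∈ Set.Ioo (0:ℝ) 1) :
    Tendsto
      (fun n : ℕ =>
        (1 / (n : ℝ)) * Real.logb 2
          ((P : ℝ) ^ (⌊w * n⌋₊) *
            (Nat.choose (⌊w * n⌋₊ + (n - ⌊w * n⌋₊) / (K + 1)) ⌊w * n⌋₊ : ℝ)))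
      atTop
      (nhds (((w * K + 1) / (K + 1)) * binH (w * (K + 1) / (w * K + 1)) +
        w * Real.logb 2 P)) := by
  obtain ⟨hw0, hw1⟩ := hw
  have hweight := (tendsto_nat_floor_mul_div_atTop hw0.le).comp tendsto_natCast_atTop_atTop
  have hrest := tendsto_natCast_div_div_atTop (K + 1)
    (tendsto_sub_nat_floor_mul_div_atTop hw0.le hw1.le)
  push_cast at hrest
  have hchoose := tendsto_log_choose_div_atTop hw0 (by positivity) hweight hrest
  have hsum : w + (1 - w) / (K + 1) = (w * K + 1) / (K + 1) := by field_simp; ring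
  rw [hsum, div_div_eq_mul_div] at hchoose
  convert (hchoose.div_const (log 2)).add (hweight.mul_const (logb 2 P)) using 2 with n
  · have hP' : (P : ℝ) ≠ 0 := Nat.cast_ne_zero.mpr (Nat.one_le_iff_ne_zero.mp hP)
    have hC : (Nat.choose (⌊w * n⌋₊ + (n - ⌊w * n⌋₊) / (K + 1)) ⌊w * n⌋₊ : ℝ) ≠ 0 :=
      Nat.cast_ne_zero.mpr (Nat.choose_pos (Nat.le_add_right _ _)).ne'
    rw [logb_mul (pow_ne_zero _ hP') hC, logb_pow, logb, logb]
    simp only [Function.comp_apply]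
    ring
  · rw [binH_eq_binEntropy_div_log_two]
    ring
end
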